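/- Let M be a pointed metric space and x ≠ y ∈ M. If the molecule m_{xy} = (δ(x) - δ(y))/d(x,y) is an extreme point of the closed unit ball of F(M), then the metric segment [x,y] = {z ∈ M : d(x,y) = d(z,x) + d(z,y)} equals {x,y}. -/

import Mathlib

noncomputable section

open Metric Set

/-- The space of real-valued Lipschitz functions on `M` vanishing at `base`. -/
structure Lip0 (M : Type*) [MetricSpace M] (base : M) where
  toFun : M → ℝ
  exists_lip' : ∃ K, LipschitzWith K toFun
  map_base' : toFun base = 0

namespace Lip0

variable {M : Type*} [MetricSpace M] {base : M}

instance : FunLike (Lip0 M base) M ℝ where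
  coe := toFun
  coe_injective := by rintro ⟨f, _, _⟩ ⟨g, _, _⟩ h; simpa using h

@[simp] lemma map_base (f : Lip0 M base) : f base = 0 := f.map_base'

/-- The set of (nonnegative real) Lipschitz constants of `f`. -/
def lipSet (f : Lip0 M base) : Set ℝ :=
  {K | 0 ≤ K ∧ ∀ x y, |f x - f y| ≤ K * dist x y}

lemma lipSet_nonempty (f : Lip0 M base) : (lipSet f).Nonempty := by
  obtain ⟨K, hK⟩ := f.exists_lip'
  exact ⟨K, K.coe_nonneg, fun x y => by
    have h := hK.dist_le_mul x y; rw [Real.dist_eq] at h; exact h⟩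

lemma lipSet_bddBelow (f : Lip0 M base) : BddBelow (lipSet f) :=
  ⟨0, fun K hK => hK.1⟩

lemma sInf_mem_lipSet (f : Lip0 M base) : sInf (lipSet f) ∈ lipSet f := by
  constructor
  · exact le_csInf (lipSet_nonempty f) fun K hK => hK.1
  · intro x y
    rcases eq_or_ne x y with rfl | hxy
    · simp
    · have hd : 0 < dist x y := dist_pos.2 hxy
      rw [← div_le_iff₀ hd]
      exact le_csInf (lipSet_nonempty f) fun K hK => (div_le_iff₀ hd).2 (hK.2 x y)

instance : Zero (Lip0 M base) :=
  ⟨⟨fun _ => 0, ⟨0, LipschitzWith.const 0⟩, rfl⟩⟩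

instance : Add (Lip0 M base) :=
  ⟨fun f g => ⟨fun t => f t + g t, by
    obtain ⟨Kf, hf⟩ := f.exists_lip'; obtain ⟨Kg, hg⟩ := g.exists_lip'
    exact ⟨Kf + Kg, hf.add hg⟩, by simp⟩⟩

instance : Neg (Lip0 M base) :=
  ⟨fun f => ⟨fun t => -f t, by
    obtain ⟨Kf, hf⟩ := f.exists_lip'
    exact ⟨Kf, hf.neg⟩, by simp⟩⟩

def rsmul (c : ℝ) (f : Lip0 M base) : Lip0 M base :=
  ⟨fun t => c * f t, by
    obtain ⟨Kf, hf⟩ := f.exists_lip'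
    refine ⟨⟨|c|, abs_nonneg c⟩ * Kf, LipschitzWith.of_dist_le_mul fun x y => ?_⟩
    have h1 : dist (c * f x) (c * f y) = |c| * |f x - f y| := by
      rw [Real.dist_eq, ← abs_mul, mul_sub]
    have h2 := hf.dist_le_mul x y
    rw [Real.dist_eq] at h2
    rw [h1]
    calc |c| * |f x - f y| ≤ |c| * (Kf * dist x y) :=
          mul_le_mul_of_nonneg_left h2 (abs_nonneg c)
      _ = (⟨|c|, abs_nonneg c⟩ * Kf : NNReal) * dist x y := (mul_assoc _ _ _).symm, by simp⟩

instance : SMul ℝ (Lip0 M base) := ⟨rsmul⟩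
instance : SMul ℕ (Lip0 M base) := ⟨fun n => rsmul (n : ℝ)⟩
instance : SMul ℤ (Lip0 M base) := ⟨fun n => rsmul (n : ℝ)⟩
instance : Sub (Lip0 M base) := ⟨fun f g => f + -g⟩

@[simp] lemma coe_zero : ⇑(0 : Lip0 M base) = fun _ => 0 := rfl
@[simp] lemma coe_add (f g : Lip0 M base) : ⇑(f + g) = fun t => f t + g t := rfl
@[simp] lemma coe_neg (f : Lip0 M base) : ⇑(-f) = fun t => -f t := rfl
@[simp] lemma coe_smul (c : ℝ) (f : Lip0 M base) : ⇑(c • f) = fun t => c * f t := rfl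
@[simp] lemma coe_sub (f g : Lip0 M base) : ⇑(f - g) = fun t => f t - g t := by
  show (fun t => f t + -(g t)) = _
  funext t; ring

instance : AddCommGroup (Lip0 M base) :=
  (DFunLike.coe_injective (F := Lip0 M base)).addCommGroup _
    rfl (fun _ _ => rfl) (fun _ => rfl) (fun f g => coe_sub f g)
    (fun f n => by funext t; show (n : ℝ) * f t = n • f t; simp)
    (fun f n => by funext t; show (n : ℝ) * f t = n • f t; simp)

instance : Module ℝ (Lip0 M base) :=
  (DFunLike.coe_injective (F := Lip0 M base)).module ℝ
    { toFun := fun f : Lip0 M base => ⇑f, map_zero' := rfl, map_add' := fun _ _ => rfl }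
    (fun _ _ => rfl)

lemma lipSet_neg (f : Lip0 M base) : lipSet (-f) = lipSet f := by
  unfold lipSet
  ext K
  have e : ∀ x y : M, (-f) x - (-f) y = -(f x - f y) := fun x y => by
    show -f x - -f y = -(f x - f y); ring
  constructor <;> rintro ⟨h0, h⟩ <;> refine ⟨h0, fun x y => ?_⟩
  · have := h x y; rwa [e, abs_neg] at this
  · rw [e, abs_neg]; exact h x y

instance : NormedAddCommGroup (Lip0 M base) :=
  AddGroupNorm.toNormedAddCommGroup
  { toFun := fun f => sInf (lipSet f)
    map_zero' := by
      apply le_antisymm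
      · exact csInf_le (lipSet_bddBelow _) ⟨le_refl 0, fun x y => by simp⟩
      · exact (sInf_mem_lipSet (0 : Lip0 M base)).1
    add_le' := fun f g => by
      apply csInf_le (lipSet_bddBelow _)
      refine ⟨add_nonneg (sInf_mem_lipSet f).1 (sInf_mem_lipSet g).1, fun x y => ?_⟩
      have hf := (sInf_mem_lipSet f).2 x y
      have hg := (sInf_mem_lipSet g).2 x y
      calc |(f + g) x - (f + g) y| = |(f x - f y) + (g x - g y)| := by
            simp [coe_add]; ring_nf
        _ ≤ |f x - f y| + |g x - g y| := abs_add_le _ _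
        _ ≤ sInf (lipSet f) * dist x y + sInf (lipSet g) * dist x y := add_le_add hf hg
        _ = (sInf (lipSet f) + sInf (lipSet g)) * dist x y := by ring
    neg' := fun f => by show sInf (lipSet (-f)) = sInf (lipSet f); rw [lipSet_neg]
    eq_zero_of_map_eq_zero' := fun f hf => by
      have hf' : sInf (lipSet f) = 0 := hf
      apply DFunLike.coe_injective
      funext t
      have h := (sInf_mem_lipSet f).2 t base
      rw [hf', zero_mul] at h
      have h0 : f t - f base = 0 := abs_nonpos_iff.1 h
      show f t = (0 : Lip0 M base) t
      have : (0 : Lip0 M base) t = 0 := rfl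
      rw [this]
      simpa using h0 }

lemma norm_def (f : Lip0 M base) : ‖f‖ = sInf (lipSet f) := rfl

instance : NormedSpace ℝ (Lip0 M base) where
  norm_smul_le c f := by
    rw [norm_def, norm_def, Real.norm_eq_abs]
    apply csInf_le (lipSet_bddBelow _)
    refine ⟨mul_nonneg (abs_nonneg c) (sInf_mem_lipSet f).1, fun x y => ?_⟩
    have hf := (sInf_mem_lipSet f).2 x y
    calc |(c • f) x - (c • f) y| = |c| * |f x - f y| := by
          rw [coe_smul]; rw [← abs_mul]; ring_nf
      _ ≤ |c| * (sInf (lipSet f) * dist x y) :=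
          mul_le_mul_of_nonneg_left hf (abs_nonneg c)
      _ = |c| * sInf (lipSet f) * dist x y := by ring

lemma norm_apply_le (f : Lip0 M base) (x y : M) : |f x - f y| ≤ ‖f‖ * dist x y :=
  (sInf_mem_lipSet f).2 x y

end Lip0

open Lip0 NormedSpace

variable (M : Type*) [MetricSpace M]

/-- The Dirac evaluation functional at `x`. -/
def deltaF (base x : M) : StrongDual ℝ (Lip0 M base) :=
  LinearMap.mkContinuous
    { toFun := fun f => f x
      map_add' := fun _ _ => rfl
      map_smul' := fun _ _ => rfl }
    (dist x base)
    (fun f => by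
      have h := Lip0.norm_apply_le f x base
      simp only [Lip0.map_base, sub_zero] at h
      rw [Real.norm_eq_abs, mul_comm]; exact h)

variable {M}

@[simp] lemma deltaF_apply (base x : M) (f : Lip0 M base) : deltaF M base x f = f x := rfl

/-- The molecule `(δ x - δ y)/d(x,y)`. -/
def molecule (base x y : M) : StrongDual ℝ (Lip0 M base) :=
  (dist x y)⁻¹ • (deltaF M base x - deltaF M base y)

variable (M) in
/-- The Lipschitz-free space over `M`, realized as the closed linear span of the Dirac
evaluations inside the dual of `Lip0 M base`. -/
def FreeSpace (base : M) : Submodule ℝ (StrongDual ℝ (Lip0 M base)) :=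
  (Submodule.span ℝ (Set.range (deltaF M base))).topologicalClosure

variable (M) in
/-- The subspace of the free space generated by the Diracs of a subset `S ⊆ M`. -/
def FreeSpaceOn (base : M) (S : Set M) : Submodule ℝ (StrongDual ℝ (Lip0 M base)) :=
  (Submodule.span ℝ (deltaF M base '' S)).topologicalClosure

lemma deltaF_mem (base x : M) : deltaF M base x ∈ FreeSpace M base :=
  Submodule.le_topologicalClosure _ (Submodule.subset_span ⟨x, rfl⟩)

lemma molecule_mem (base x y : M) : molecule base x y ∈ FreeSpace M base :=
  Submodule.smul_mem _ _ (Submodule.sub_mem _ (deltaF_mem base x) (deltaF_mem base y))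

/-- The molecule as an element of the free space. -/
def mol (base x y : M) : ↥(FreeSpace M base) := ⟨molecule base x y, molecule_mem base x y⟩

/-- The "magic function" of Ivakhno, Kadets and Werner associated to the pair `(p, q)`,
with base point `o`. -/
def magicFun (o p q : M) (t : M) : ℝ :=
  (dist p q / 2) *
    ((dist t q - dist t p) / (dist t q + dist t p) -
      (dist o q - dist o p) / (dist o q + dist o p))

/-!
If `z ∈ [x,y]` differs from `x` and `y`, then
`m_{xy} = (d(z,x)/d(x,y)) • m_{xz} + (d(z,y)/d(x,y)) • m_{zy}` is a proper convex combination of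
two molecules of the unit ball. They are distinct, because the 1-Lipschitz function `d(·,z)`
takes the value `1` on `m_{xz}` and `-1` on `m_{zy}`.
-/

def distFun (base z : M) : Lip0 M base :=
  ⟨fun t => dist t z - dist base z,
    ⟨1, LipschitzWith.of_dist_le_mul fun a b => by
      simpa only [Real.dist_eq, sub_sub_sub_cancel_right, NNReal.coe_one, one_mul]
        using abs_dist_sub_le a b z⟩,
    sub_self _⟩

@[simp] lemma distFun_apply (base z t : M) : distFun base z t = dist t z - dist base z := rfl

lemma molecule_apply (base x y : M) (f : Lip0 M base) :
    molecule base x y f = (dist x y)⁻¹ * (f x - f y) := rfl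

lemma norm_mol_le_one (base x y : M) : ‖mol base x y‖ ≤ 1 := by
  refine ContinuousLinearMap.opNorm_le_bound (molecule base x y) zero_le_one fun f => ?_
  rw [molecule_apply, Real.norm_eq_abs, abs_mul, abs_inv, abs_of_nonneg dist_nonneg, one_mul]
  rcases eq_or_ne x y with rfl | hxy
  · simp
  · rw [inv_mul_le_iff₀ (dist_pos.2 hxy), mul_comm]
    exact norm_apply_le f x y

lemma mol_mem_closedBall (base x y : M) :
    mol base x y ∈ closedBall (0 : ↥(FreeSpace M base)) 1 :=
  (mem_closedBall_zero_iff (E := ↥(FreeSpace M base))).2 (norm_mol_le_one base x y)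

lemma mol_eq_smul_add_smul (base x y z : M) (hzx : z ≠ x) (hzy : z ≠ y) :
    mol base x y =
      (dist z x / dist x y) • mol base x z + (dist z y / dist x y) • mol base z y := by
  apply Subtype.ext
  change molecule base x y =
    (dist z x / dist x y) • molecule base x z + (dist z y / dist x y) • molecule base z y
  simp only [molecule, smul_smul, dist_comm x z, div_mul_eq_mul_div,
    mul_inv_cancel₀ (dist_ne_zero.2 hzx), mul_inv_cancel₀ (dist_ne_zero.2 hzy), one_div,
    ← smul_add, sub_add_sub_cancel]

lemma mol_mem_openSegment (base x y z : M) (hzx : z ≠ x) (hzy : z ≠ y)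
    (hz : dist x y = dist z x + dist z y) :
    mol base x y ∈ openSegment ℝ (mol base x z) (mol base z y) := by
  have hzx' : 0 < dist z x := dist_pos.2 hzx
  have hzy' : 0 < dist z y := dist_pos.2 hzy
  have hxy : 0 < dist x y := hz ▸ add_pos hzx' hzy'
  refine ⟨dist z x / dist x y, dist z y / dist x y, by positivity, by positivity, ?_,
    (mol_eq_smul_add_smul base x y z hzx hzy).symm⟩
  rw [← add_div, ← hz, div_self hxy.ne']

lemma molecule_apply_distFun_left (base x z : M) (hxz : x ≠ z) :
    molecule base x z (distFun base z) = 1 := by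
  rw [molecule_apply, distFun_apply, distFun_apply, dist_self, sub_sub_sub_cancel_right, sub_zero,
    inv_mul_cancel₀ (dist_ne_zero.2 hxz)]

lemma molecule_apply_distFun_right (base y z : M) (hzy : z ≠ y) :
    molecule base z y (distFun base z) = -1 := by
  rw [molecule_apply, distFun_apply, distFun_apply, dist_self, sub_sub_sub_cancel_right, zero_sub,
    mul_neg, dist_comm y z, inv_mul_cancel₀ (dist_ne_zero.2 hzy)]

lemma mol_ne_mol (base x y z : M) (hzx : z ≠ x) (hzy : z ≠ y) :
    mol base x z ≠ mol base z y := by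
  intro heq
  have hval := congrArg (fun m : ↥(FreeSpace M base) => (m : StrongDual ℝ _) (distFun base z)) heq
  simp only [mol, molecule_apply_distFun_left base x z hzx.symm,
    molecule_apply_distFun_right base y z hzy] at hval
  norm_num at hval

theorem stmt_10_general {M : Type*} [MetricSpace M] (base x y : M)
    (h : mol base x y ∈
      Set.extremePoints ℝ (Metric.closedBall (0 : ↥(FreeSpace M base)) 1)) :
    {z : M | dist x y = dist z x + dist z y} = {x, y} := by
  refine Set.Subset.antisymm (fun z hz => ?_) ?_
  · by_contra hzxy
    obtain ⟨hzx, hzy⟩ : z ≠ x ∧ z ≠ y := by simpa [not_or] using hzxy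
    have hext := (mem_extremePoints.1 h).2 _ (mol_mem_closedBall base x z) _
      (mol_mem_closedBall base z y) (mol_mem_openSegment base x y z hzx hzy hz)
    exact mol_ne_mol base x y z hzx hzy (hext.1.trans hext.2.symm)
  · rintro z (rfl | rfl) <;> simp [dist_comm]

/-- If the molecule `m_{xy}` is an extreme point of the unit ball of `F(M)`, then the
metric segment `[x,y]` reduces to `{x, y}`. -/
theorem stmt_10 {M : Type*} [MetricSpace M] (base x y : M) (hxy : x ≠ y)
    (h : mol base x y ∈
      Set.extremePoints ℝ (Metric.closedBall (0 : ↥(FreeSpace M base)) 1)) :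
    {z : M | dist x y = dist z x + dist z y} = {x, y} :=
  stmt_10_general base x y h
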